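/- For every multi-index k = (k_1,…,k_l) of nonnegative integers with all k_j ≥ 1 in the relevant entries, the function χ̃_k satisfies the recurrence z · χ̃_k(z) = Σ_{j=1}^l (c_j + k_j) · χ̃_{k − e_j}(z), where e_j is the j-th standard unit vector. -/

import Mathlib

open MeasureTheory

/-- The union of cuts `B = ∪_j {a j t : t ≥ 1}`. -/
def cutSet (l : ℕ) (a : Fin l → ℂ) : Set ℂ :=
  ⋃ j, {z : ℂ | ∃ t : ℝ, 1 ≤ t ∧ z = a j * t}

/-- The integrand `∏_j (s - ā_j)^(k_j) · W̄(s) · e^{-zs}`. -/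
noncomputable def chiIntegrand (l : ℕ) (a : Fin l → ℂ) (Wb : ℂ → ℂ)
    (k : Fin l → ℕ) (z s : ℂ) : ℂ :=
  (∏ j, (s - starRingEnd ℂ (a j)) ^ (k j)) * Wb s * Complex.exp (-(z * s))

/-- `χ̃_k(z) = W(z) ∫_{ā₁}^{z̄·∞} ∏_j (s-ā_j)^(k_j) W̄(s) e^{-zs} ds`, the contour
being the segment from `ā₁` to `z̄` followed by the ray `{z̄ t : t ≥ 1}`. -/
noncomputable def chiTilde (l : ℕ) (a : Fin l → ℂ) (W Wb : ℂ → ℂ) (abar1 : ℂ)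
    (k : Fin l → ℕ) (z : ℂ) : ℂ :=
  W z *
    ((∫ t in (0:ℝ)..1,
        chiIntegrand l a Wb k z (abar1 + (t : ℂ) * (starRingEnd ℂ z - abar1))) *
        (starRingEnd ℂ z - abar1) +
      (∫ t in Set.Ioi (1 : ℝ), chiIntegrand l a Wb k z (starRingEnd ℂ z * t)) *
        starRingEnd ℂ z)

/-!
Off the cuts, `W` is holomorphic with `‖W‖ = ∏ ‖· - a j‖ ^ c j`. Near each such point the
product has a holomorphic branch `P`, and `W / P` is holomorphic of modulus one, hence constant by
the maximum modulus principle; so `W' / W = ∑ c j / (· - a j)`, and the same holds for `W̄` with the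
conjugate points. For `k ≥ 1` this makes the integrand `F_k` of `χ̃_k` satisfy
`F_k' = ∑ (c j + k j) F_{k - e_j} - z F_k`. Integrating `F_k'` along the segment from `ā₁` to `z̄`
and the ray beyond gives `F_k(∞) - F_k(ā₁) = 0`: `F_k` vanishes at `ā₁` because `k₁ ≥ 1`, and it
decays like `t ^ N e^{-|z|² t}` along the ray.
-/

open Complex ComplexConjugate Set Filter Topology

theorem eventually_hasDerivAt_log_sub {a u : ℂ} (hu : u ≠ a) :
    ∀ᶠ v in 𝓝 u, HasDerivAt (fun v => log ((v - a) / (u - a)) + log (u - a)) (v - a)⁻¹ v ∧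
      (log ((v - a) / (u - a)) + log (u - a)).re = Real.log ‖v - a‖ := by
  have hua : u - a ≠ 0 := sub_ne_zero.mpr hu
  have hslit : ∀ᶠ v in 𝓝 u, (v - a) / (u - a) ∈ slitPlane := by
    have hcont : ContinuousAt (fun v => (v - a) / (u - a)) u := by fun_prop
    exact hcont.eventually_mem (isOpen_slitPlane.mem_nhds (by simp [div_self hua]))
  filter_upwards [hslit] with v hv
  have hva : v - a ≠ 0 := by simpa [hua] using slitPlane_ne_zero hv
  constructor
  · have hq : HasDerivAt (fun v => (v - a) / (u - a)) (u - a)⁻¹ v := by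
      simpa using ((hasDerivAt_id v).sub_const a).div_const (u - a)
    refine (((hasDerivAt_log hv).comp v hq).add_const (log (u - a))).congr_deriv ?_
    rw [← mul_inv, div_mul_cancel₀ _ hua]
  · rw [add_re, log_re, log_re, norm_div, Real.log_div (norm_ne_zero_iff.mpr hva)
      (norm_ne_zero_iff.mpr hua), sub_add_cancel]

theorem exists_local_branch_prod_pow {ι : Type*} [Fintype ι] (a : ι → ℂ) (c : ι → ℝ) {u : ℂ}
    (hu : ∀ j, u ≠ a j) :
    ∃ P : ℂ → ℂ, (∀ v, P v ≠ 0) ∧ ∀ᶠ v in 𝓝 u,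
      ‖P v‖ = ∏ j, ‖v - a j‖ ^ c j ∧ HasDerivAt P (P v * ∑ j, c j / (v - a j)) v := by
  set L : ι → ℂ → ℂ := fun j v => log ((v - a j) / (u - a j)) + log (u - a j)
  refine ⟨fun v => exp (∑ j, c j * L j v), fun v => exp_ne_zero _, ?_⟩
  filter_upwards [eventually_all.mpr fun j => eventually_hasDerivAt_log_sub (hu j),
    eventually_all.mpr fun j => eventually_ne_nhds (hu j)] with v hL hva
  constructor
  · rw [norm_exp, re_sum, Real.exp_sum]
    refine Finset.prod_congr rfl fun j _ => ?_
    rw [re_ofReal_mul, (hL j).2, Real.rpow_def_of_pos (norm_pos_iff.mpr (sub_ne_zero.mpr (hva j))),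
      mul_comm]
  · have hsum : HasDerivAt (fun v => ∑ j, c j * L j v) (∑ j, c j * (v - a j)⁻¹) v :=
      HasDerivAt.fun_sum fun j _ => (hL j).1.const_mul _
    simpa [div_eq_mul_inv] using hsum.cexp

theorem Complex.eqOn_const_mul_of_norm_eq {f g : ℂ → ℂ} {U : Set ℂ} {u : ℂ}
    (hU : IsPreconnected U) (ho : IsOpen U) (hf : DifferentiableOn ℂ f U)
    (hg : DifferentiableOn ℂ g U) (hg0 : ∀ v ∈ U, g v ≠ 0) (hfg : ∀ v ∈ U, ‖f v‖ = ‖g v‖)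
    (hu : u ∈ U) : EqOn f (fun v => f u / g u * g v) U := by
  have hnorm : ∀ v ∈ U, ‖f v / g v‖ = 1 := fun v hv => by
    rw [norm_div, hfg v hv, div_self (norm_ne_zero_iff.mpr (hg0 v hv))]
  have hconst := eqOn_of_isPreconnected_of_isMaxOn_norm (f := fun v => f v / g v) hU ho
    (hf.div hg hg0) hu fun v hv => by
      simp only [mem_ofPred_eq, Function.comp_apply, hnorm v hv, hnorm u hu, le_refl]
  intro v hv
  have hv' : f v / g v = f u / g u := hconst hv
  simp only [← hv', div_mul_cancel₀ _ (hg0 v hv)]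

theorem hasDerivAt_of_norm_eq_prod_rpow {ι : Type*} [Fintype ι] {a : ι → ℂ} {c : ι → ℝ}
    {W : ℂ → ℂ} {U : Set ℂ} (hU : IsOpen U) (hW : DifferentiableOn ℂ W U)
    (hWabs : ∀ v ∈ U, ‖W v‖ = ∏ j, ‖v - a j‖ ^ c j) {u : ℂ} (huU : u ∈ U) (hu : ∀ j, u ≠ a j) :
    HasDerivAt W (W u * ∑ j, c j / (u - a j)) u := by
  obtain ⟨P, hP0, hP⟩ := exists_local_branch_prod_pow a c hu
  obtain ⟨r, hr, hball⟩ := Metric.mem_nhds_iff.mp (inter_mem (hU.mem_nhds huU) hP)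
  have hWP : EqOn W (fun v => W u / P u * P v) (Metric.ball u r) :=
    Complex.eqOn_const_mul_of_norm_eq (convex_ball u r).isPreconnected Metric.isOpen_ball
      (hW.mono fun v hv => (hball hv).1)
      (fun v hv => (hball hv).2.2.differentiableAt.differentiableWithinAt) (fun v _ => hP0 v)
      (fun v hv => by rw [hWabs v (hball hv).1, (hball hv).2.1]) (Metric.mem_ball_self hr)
  have hderiv := ((hball (Metric.mem_ball_self hr)).2.2.const_mul (W u / P u)).congr_of_eventuallyEq
    (eventually_of_mem (Metric.ball_mem_nhds u hr) hWP)
  rwa [← mul_assoc, div_mul_cancel₀ _ (hP0 u)] at hderiv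

theorem prod_pow_sub_single {ι M : Type*} [Fintype ι] [DecidableEq ι] [CommMonoid M] (x : ι → M)
    (k : ι → ℕ) (j : ι) :
    ∏ i, x i ^ (k - Pi.single j 1 : ι → ℕ) i =
      x j ^ (k j - 1) * ∏ i ∈ Finset.univ.erase j, x i ^ k i := by
  rw [← Finset.mul_prod_erase _ _ (Finset.mem_univ j)]
  congr 1
  · simp
  · exact Finset.prod_congr rfl fun i hi => by simp [Finset.ne_of_mem_erase hi]

theorem prod_pow_eq_mul_prod_pow_sub_single {ι M : Type*} [Fintype ι] [DecidableEq ι]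
    [CommMonoid M] (x : ι → M) {k : ι → ℕ} {j : ι} (hk : k j ≠ 0) :
    ∏ i, x i ^ k i = x j * ∏ i, x i ^ (k - Pi.single j 1 : ι → ℕ) i := by
  rw [prod_pow_sub_single, ← mul_assoc, ← pow_succ',
    Nat.sub_add_cancel (Nat.one_le_iff_ne_zero.mpr hk)]
  exact (Finset.mul_prod_erase _ (fun i => x i ^ k i) (Finset.mem_univ j)).symm

theorem hasDerivAt_prod_pow_sub {ι : Type*} [Fintype ι] [DecidableEq ι] (b : ι → ℂ) (k : ι → ℕ)
    (s : ℂ) :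
    HasDerivAt (fun s => ∏ i, (s - b i) ^ k i)
      (∑ j, (k j : ℂ) * ∏ i, (s - b i) ^ (k - Pi.single j 1 : ι → ℕ) i) s := by
  refine (HasDerivAt.fun_finsetProd fun i _ =>
    ((hasDerivAt_id s).sub_const (b i)).pow (k i)).congr_deriv (Finset.sum_congr rfl fun j _ => ?_)
  rw [prod_pow_sub_single]
  simp only [Pi.pow_apply, id, smul_eq_mul, mul_one]
  ring

noncomputable def segmentRayIntegral (p q : ℂ) (f : ℂ → ℂ) : ℂ :=
  (∫ t in (0 : ℝ)..1, f (p + (t : ℂ) * (q - p))) * (q - p) + (∫ t in Ioi (1 : ℝ), f (q * t)) * q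

def SegmentRayIntegrable (p q : ℂ) (f : ℂ → ℂ) : Prop :=
  IntervalIntegrable (fun t : ℝ => f (p + (t : ℂ) * (q - p))) volume 0 1 ∧
    IntegrableOn (fun t : ℝ => f (q * t)) (Ioi 1)

namespace SegmentRayIntegrable

variable {p q : ℂ} {f g : ℂ → ℂ}

theorem sub (hf : SegmentRayIntegrable p q f) (hg : SegmentRayIntegrable p q g) :
    SegmentRayIntegrable p q fun s => f s - g s :=
  ⟨hf.1.sub hg.1, hf.2.sub hg.2⟩

theorem const_mul (hf : SegmentRayIntegrable p q f) (α : ℂ) :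
    SegmentRayIntegrable p q fun s => α * f s :=
  ⟨hf.1.const_mul α, hf.2.const_mul α⟩

theorem finset_sum {ι : Type*} {s : Finset ι} {f : ι → ℂ → ℂ}
    (hf : ∀ i ∈ s, SegmentRayIntegrable p q (f i)) :
    SegmentRayIntegrable p q fun x => ∑ i ∈ s, f i x :=
  ⟨by simpa [Finset.sum_fn] using IntervalIntegrable.sum s fun i hi => (hf i hi).1,
    integrable_finsetSum s fun i hi => (hf i hi).2⟩

theorem of_norm_le {g : ℂ → ℝ} (hg : Continuous g)
    (hseg : ∀ t ∈ Ioc (0 : ℝ) 1, ContinuousAt f (p + (t : ℂ) * (q - p)) ∧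
      ‖f (p + (t : ℂ) * (q - p))‖ ≤ g (p + (t : ℂ) * (q - p)))
    (hray : ∀ t ∈ Ioi (1 : ℝ), ContinuousAt f (q * t) ∧ ‖f (q * t)‖ ≤ g (q * t))
    (hg_ray : IntegrableOn (fun t : ℝ => g (q * t)) (Ioi 1)) :
    SegmentRayIntegrable p q f := by
  refine ⟨(intervalIntegrable_iff_integrableOn_Ioc_of_le zero_le_one).mpr ?_, ?_⟩
  · refine Integrable.mono' ((hg.comp (by fun_prop)).integrableOn_Icc.mono_set
      Ioc_subset_Icc_self) ?_ (ae_restrict_of_forall_mem measurableSet_Ioc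
        fun t ht => (hseg t ht).2)
    refine ContinuousOn.aestronglyMeasurable (fun t ht => ?_) measurableSet_Ioc
    exact ((hseg t ht).1.comp (f := fun t : ℝ => p + (t : ℂ) * (q - p))
      (by fun_prop)).continuousWithinAt
  · refine Integrable.mono' hg_ray ?_
      (ae_restrict_of_forall_mem measurableSet_Ioi fun t ht => (hray t ht).2)
    refine ContinuousOn.aestronglyMeasurable (fun t ht => ?_) measurableSet_Ioi
    exact ((hray t ht).1.comp (f := fun t : ℝ => q * (t : ℂ)) (by fun_prop)).continuousWithinAt

end SegmentRayIntegrable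

section SegmentRayIntegral

variable {p q : ℂ} {f g : ℂ → ℂ}

theorem segmentRayIntegral_sub (hf : SegmentRayIntegrable p q f)
    (hg : SegmentRayIntegrable p q g) :
    segmentRayIntegral p q (fun s => f s - g s) =
      segmentRayIntegral p q f - segmentRayIntegral p q g := by
  simp only [segmentRayIntegral, intervalIntegral.integral_sub hf.1 hg.1, integral_sub hf.2 hg.2]
  ring

theorem segmentRayIntegral_const_mul (α : ℂ) :
    segmentRayIntegral p q (fun s => α * f s) = α * segmentRayIntegral p q f := by
  simp only [segmentRayIntegral, intervalIntegral.integral_const_mul, integral_const_mul]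
  ring

theorem segmentRayIntegral_finset_sum {ι : Type*} (s : Finset ι) {f : ι → ℂ → ℂ}
    (hf : ∀ i ∈ s, SegmentRayIntegrable p q (f i)) :
    segmentRayIntegral p q (fun x => ∑ i ∈ s, f i x) = ∑ i ∈ s, segmentRayIntegral p q (f i) := by
  simp only [segmentRayIntegral, intervalIntegral.integral_finsetSum fun i hi => (hf i hi).1,
    integral_finsetSum s fun i hi => (hf i hi).2, Finset.sum_mul, Finset.sum_add_distrib]

theorem segmentRayIntegral_eq_neg_of_hasDerivAt {F : ℂ → ℂ}
    (hseg : ∀ t ∈ Ioo (0 : ℝ) 1, HasDerivAt F (f (p + (t : ℂ) * (q - p))) (p + (t : ℂ) * (q - p)))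
    (hray : ∀ t ∈ Ici (1 : ℝ), HasDerivAt F (f (q * t)) (q * t))
    (hp : Tendsto (fun t : ℝ => F (p + (t : ℂ) * (q - p))) (𝓝[>] 0) (𝓝 (F p)))
    (hf : SegmentRayIntegrable p q f) (htail : Tendsto (fun t : ℝ => F (q * t)) atTop (𝓝 0)) :
    segmentRayIntegral p q f = -F p := by
  have hsegment : (∫ t in (0 : ℝ)..1, f (p + (t : ℂ) * (q - p))) * (q - p) = F q - F p := by
    rw [← intervalIntegral.integral_mul_const]
    refine intervalIntegral.integral_eq_sub_of_hasDerivAt_of_tendsto zero_lt_one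
      (fun t ht => ?_) (hf.1.mul_const _) hp ?_
    · have hγ : HasDerivAt (fun t : ℝ => p + (t : ℂ) * (q - p)) (q - p) t := by
        simpa using ((hasDerivAt_id (t : ℂ)).mul_const (q - p)).const_add p |>.comp_ofReal
      exact (hseg t ht).comp t hγ
    · have hcont : ContinuousAt (fun t : ℝ => F (p + (t : ℂ) * (q - p))) 1 := by
        refine ContinuousAt.comp (g := F) ?_ (by fun_prop)
        simpa using (hray 1 self_mem_Ici).continuousAt
      simpa using hcont.tendsto.mono_left nhdsWithin_le_nhds
  have hray' : (∫ t in Ioi (1 : ℝ), f (q * t)) * q = 0 - F q := by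
    rw [← integral_mul_const]
    refine integral_Ioi_of_hasDerivAt_of_tendsto' (fun t ht => ?_)
      (hf.2.mul_const _) htail |>.trans (by simp)
    have hr : HasDerivAt (fun t : ℝ => q * (t : ℂ)) q t := by
      simpa using ((hasDerivAt_id (t : ℂ)).const_mul q).comp_ofReal
    exact (hray t ht).comp t hr
  rw [segmentRayIntegral, hsegment, hray']
  ring

end SegmentRayIntegral

theorem integrableOn_Ioi_one_rpow_mul_exp_neg_mul {E b : ℝ} (hE : -1 < E) (hb : 0 < b) :
    IntegrableOn (fun t : ℝ => t ^ E * Real.exp (-b * t)) (Ioi 1) := by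
  simpa using (integrableOn_rpow_mul_exp_neg_mul_rpow hE one_pos hb).mono_set
    (Ioi_subset_Ioi zero_le_one)

theorem isClosed_cutSet (l : ℕ) (a : Fin l → ℂ) : IsClosed (cutSet l a) := by
  refine isClosed_iUnion_of_finite fun j => ?_
  have hray : {z : ℂ | ∃ t : ℝ, 1 ≤ t ∧ z = a j * t} = (fun t : ℝ => a j * t) '' Ici 1 := by
    ext z
    simp [eq_comm]
  rw [hray]
  by_cases ha : a j = 0
  · simp [ha, nonempty_Ici.image_const]
  · exact ((Homeomorph.mulLeft₀ _ ha).isClosedEmbedding.comp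
      isometry_ofReal.isClosedEmbedding).isClosedMap _ isClosed_Ici

theorem mem_cutSet_self (l : ℕ) (a : Fin l → ℂ) (j : Fin l) : a j ∈ cutSet l a :=
  mem_iUnion.mpr ⟨j, 1, le_rfl, by simp⟩

theorem chiTilde_eq_mul_segmentRayIntegral (l : ℕ) (a : Fin l → ℂ) (W Wb : ℂ → ℂ) (p : ℂ)
    (m : Fin l → ℕ) (z : ℂ) :
    chiTilde l a W Wb p m z = W z * segmentRayIntegral p (conj z) (chiIntegrand l a Wb m z) :=
  rfl

noncomputable def chiIntegrandNorm (l : ℕ) (a : Fin l → ℂ) (c : Fin l → ℝ) (m : Fin l → ℕ)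
    (z s : ℂ) : ℝ :=
  (∏ j, ‖s - conj (a j)‖ ^ ((m j : ℝ) + c j)) * Real.exp (-(z * s)).re

section Chi

variable {l : ℕ} {a : Fin l → ℂ} {c : Fin l → ℝ} {W Wb : ℂ → ℂ}

theorem ne_conj_of_conj_notMem_cutSet {s : ℂ} (hs : conj s ∉ cutSet l a) (j : Fin l) :
    s ≠ conj (a j) := by
  rintro rfl
  exact hs (by simpa using mem_cutSet_self l a j)

theorem conj_notMem_cutSet_of_mem_contour {i : Fin l} {q : ℂ} (hq : q ≠ 0)
    (hpath : ∀ s : ℂ, (s ∈ segment ℝ (conj (a i)) q ∨ ∃ t : ℝ, 1 ≤ t ∧ s = q * t) →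
      s ≠ conj (a i) → ∀ j, ∀ t : ℝ, 1 ≤ t → s ≠ conj (a j) * t) :
    (∀ t ∈ Ioc (0 : ℝ) 1, conj (conj (a i) + (t : ℂ) * (q - conj (a i))) ∉ cutSet l a) ∧
      ∀ t ∈ Ici (1 : ℝ), conj (q * t) ∉ cutSet l a := by
  have hoff : ∀ s, (s ∈ segment ℝ (conj (a i)) q ∨ ∃ t : ℝ, 1 ≤ t ∧ s = q * t) →
      s ≠ conj (a i) → conj s ∉ cutSet l a := by
    intro s hs hsp hmem
    obtain ⟨j, t, ht, hst⟩ := mem_iUnion.mp hmem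
    exact hpath s hs hsp j t ht (by rw [← conj_conj s, hst]; simp)
  -- if the ray through `q` met `conj (a i)`, its part beyond that point would lie on the cut
  have hray_ne : ∀ t : ℝ, 1 ≤ t → q * t ≠ conj (a i) := by
    intro t ht h
    have ht0 : 0 < t := one_pos.trans_le ht
    refine hpath (q * (t + 1 : ℝ)) (Or.inr ⟨t + 1, by linarith, rfl⟩) (fun h' => hq ?_) i
      ((t + 1) / t) (by rw [le_div_iff₀ ht0]; linarith) ?_
    · rw [← h] at h'
      push_cast at h'
      linear_combination h'
    · rw [← h]
      push_cast
      rw [mul_assoc, mul_div_cancel₀ _ (by exact_mod_cast ht0.ne')]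
  refine ⟨fun t ht => hoff _ (Or.inl ?_) ?_,
    fun t ht => hoff _ (Or.inr ⟨t, ht, rfl⟩) (hray_ne t ht)⟩
  · rw [segment_eq_image']
    exact ⟨t, ⟨ht.1.le, ht.2⟩, by simp⟩
  · intro h
    have hqp : q ≠ conj (a i) := by simpa using hray_ne 1 le_rfl
    have : (t : ℂ) * (q - conj (a i)) = 0 := by linear_combination h
    rcases mul_eq_zero.mp this with h0 | h0
    · exact ht.1.ne' (by exact_mod_cast h0)
    · exact hqp (sub_eq_zero.mp h0)

theorem norm_conj_branch (hWabs : ∀ z ∉ cutSet l a, ‖W z‖ = ∏ j, ‖z - a j‖ ^ c j)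
    (hWb : ∀ s, Wb s = conj (W (conj s))) {s : ℂ} (hs : conj s ∉ cutSet l a) :
    ‖Wb s‖ = ∏ j, ‖s - conj (a j)‖ ^ c j := by
  simp_rw [hWb, norm_conj, hWabs _ hs, ← norm_conj (s - conj _), map_sub, conj_conj]

theorem hasDerivAt_conj_branch (hW : DifferentiableOn ℂ W (cutSet l a)ᶜ)
    (hWabs : ∀ z ∉ cutSet l a, ‖W z‖ = ∏ j, ‖z - a j‖ ^ c j)
    (hWb : ∀ s, Wb s = conj (W (conj s))) {s : ℂ} (hs : conj s ∉ cutSet l a) :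
    HasDerivAt Wb (Wb s * ∑ j, (c j : ℂ) / (s - conj (a j))) s := by
  have hW' := hasDerivAt_of_norm_eq_prod_rpow (isClosed_cutSet l a).isOpen_compl hW
    (fun v hv => by simpa using hWabs v hv) hs
    (fun j h => hs (h ▸ mem_cutSet_self l a j))
  rw [show Wb = conj ∘ W ∘ conj from funext hWb]
  have h := hW'.conj_conj
  rw [conj_conj] at h
  refine h.congr_deriv ?_
  simp [map_sum]

theorem hasDerivAt_chiIntegrand {k : Fin l → ℕ} (hk : ∀ j, k j ≠ 0) {z s : ℂ}
    (hs : ∀ j, s ≠ conj (a j))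
    (hWb : HasDerivAt Wb (Wb s * ∑ j, (c j : ℂ) / (s - conj (a j))) s) :
    HasDerivAt (chiIntegrand l a Wb k z)
      (∑ j, ((c j : ℂ) + k j) * chiIntegrand l a Wb (k - Pi.single j 1) z s -
        z * chiIntegrand l a Wb k z s) s := by
  set Q : (Fin l → ℕ) → ℂ := fun m => ∏ i, (s - conj (a i)) ^ m i
  have hexp : HasDerivAt (fun s => exp (-(z * s))) (exp (-(z * s)) * -z) s :=
    (((hasDerivAt_id s).const_mul z).neg).cexp.congr_deriv (by simp)
  have hQ : Q k * ∑ j, (c j : ℂ) / (s - conj (a j)) = ∑ j, c j * Q (k - Pi.single j 1) := by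
    refine Finset.mul_sum _ _ _ |>.trans (Finset.sum_congr rfl fun j _ => ?_)
    simp only [Q]
    rw [prod_pow_eq_mul_prod_pow_sub_single _ (hk j)]
    field_simp [sub_ne_zero.mpr (hs j)]
  refine (((hasDerivAt_prod_pow_sub _ k s).fun_mul hWb).fun_mul hexp).congr_deriv ?_
  have hsplit : ∑ j, ((c j : ℂ) + k j) * chiIntegrand l a Wb (k - Pi.single j 1) z s =
      (∑ j, c j * Q (k - Pi.single j 1) + ∑ j, k j * Q (k - Pi.single j 1)) *
        (Wb s * exp (-(z * s))) := by
    rw [← Finset.sum_add_distrib, Finset.sum_mul]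
    exact Finset.sum_congr rfl fun j _ => by simp only [chiIntegrand, Q]; ring
  rw [hsplit, ← hQ]
  simp only [chiIntegrand, Q]
  ring

theorem chiIntegrand_conj_eq_zero {m : Fin l → ℕ} {i : Fin l} (hm : m i ≠ 0) (z : ℂ) :
    chiIntegrand l a Wb m z (conj (a i)) = 0 := by
  rw [chiIntegrand, Finset.prod_eq_zero (Finset.mem_univ i) (by simp [hm]), zero_mul, zero_mul]

theorem norm_chiIntegrand {m : Fin l → ℕ} {z s : ℂ} (hs : ∀ j, s ≠ conj (a j))
    (hWb : ‖Wb s‖ = ∏ j, ‖s - conj (a j)‖ ^ c j) :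
    ‖chiIntegrand l a Wb m z s‖ = chiIntegrandNorm l a c m z s := by
  simp only [chiIntegrand, chiIntegrandNorm, norm_mul, norm_prod, norm_pow, norm_exp, hWb,
    ← Finset.prod_mul_distrib]
  congr 1
  refine Finset.prod_congr rfl fun j _ => ?_
  rw [Real.rpow_add (norm_pos_iff.mpr (sub_ne_zero.mpr (hs j))), Real.rpow_natCast]

theorem chiIntegrandNorm_nonneg (m : Fin l → ℕ) (z s : ℂ) : 0 ≤ chiIntegrandNorm l a c m z s := by
  unfold chiIntegrandNorm
  positivity

theorem continuous_chiIntegrandNorm (hc : ∀ j, 0 ≤ c j) (m : Fin l → ℕ) (z : ℂ) :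
    Continuous (chiIntegrandNorm l a c m z) := by
  unfold chiIntegrandNorm
  refine Continuous.mul (continuous_finsetProd _ fun j _ => ?_) (by fun_prop)
  exact (by fun_prop : Continuous fun s => ‖s - conj (a j)‖).rpow_const
    fun _ => Or.inr (add_nonneg (Nat.cast_nonneg _) (hc j))

theorem chiIntegrandNorm_conj_eq_zero {m : Fin l → ℕ} {i : Fin l} (hm : (m i : ℝ) + c i ≠ 0)
    (z : ℂ) : chiIntegrandNorm l a c m z (conj (a i)) = 0 := by
  rw [chiIntegrandNorm, Finset.prod_eq_zero (Finset.mem_univ i), zero_mul]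
  rw [sub_self, norm_zero, Real.zero_rpow hm]

theorem chiIntegrandNorm_ray_le (hc : ∀ j, 0 ≤ c j) (m : Fin l → ℕ) (z : ℂ) {t : ℝ}
    (ht : 1 ≤ t) :
    chiIntegrandNorm l a c m z (conj z * t) ≤
      (∏ j, (‖z‖ + ‖a j‖) ^ ((m j : ℝ) + c j)) *
        (t ^ (∑ j, ((m j : ℝ) + c j)) * Real.exp (-‖z‖ ^ 2 * t)) := by
  have ht0 : 0 < t := one_pos.trans_le ht
  have hexp : (-(z * (conj z * t))).re = -‖z‖ ^ 2 * t := by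
    rw [← mul_assoc, mul_conj']
    norm_cast
    ring
  have hfactor : ∀ j, ‖conj z * t - conj (a j)‖ ≤ (‖z‖ + ‖a j‖) * t := fun j => calc
    ‖conj z * t - conj (a j)‖ ≤ ‖z‖ * t + ‖a j‖ := by
      simpa [norm_mul, abs_of_pos ht0] using norm_sub_le (conj z * t) (conj (a j))
    _ ≤ (‖z‖ + ‖a j‖) * t := by nlinarith [norm_nonneg (a j)]
  rw [chiIntegrandNorm, hexp, Real.rpow_sum_of_pos ht0, ← mul_assoc, ← Finset.prod_mul_distrib]
  gcongr with j
  rw [← Real.mul_rpow (by positivity) ht0.le]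
  exact Real.rpow_le_rpow (norm_nonneg _) (hfactor j) (add_nonneg (Nat.cast_nonneg _) (hc j))

theorem integrableOn_chiIntegrandNorm_ray (hc : ∀ j, 0 ≤ c j) (m : Fin l → ℕ) {z : ℂ}
    (hz : z ≠ 0) :
    IntegrableOn (fun t : ℝ => chiIntegrandNorm l a c m z (conj z * t)) (Ioi 1) := by
  have hE : 0 ≤ ∑ j, ((m j : ℝ) + c j) :=
    Finset.sum_nonneg fun j _ => add_nonneg (Nat.cast_nonneg _) (hc j)
  refine Integrable.mono'
    ((integrableOn_Ioi_one_rpow_mul_exp_neg_mul (by linarith)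
      (pow_pos (norm_pos_iff.mpr hz) 2)).const_mul (∏ j, (‖z‖ + ‖a j‖) ^ ((m j : ℝ) + c j)))
    ((continuous_chiIntegrandNorm hc m z).comp (by fun_prop)).aestronglyMeasurable
    (ae_restrict_of_forall_mem measurableSet_Ioi fun t ht => ?_)
  rw [Real.norm_of_nonneg (chiIntegrandNorm_nonneg m z _)]
  exact chiIntegrandNorm_ray_le hc m z (le_of_lt ht)

theorem tendsto_chiIntegrandNorm_ray (hc : ∀ j, 0 ≤ c j) (m : Fin l → ℕ) {z : ℂ} (hz : z ≠ 0) :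
    Tendsto (fun t : ℝ => chiIntegrandNorm l a c m z (conj z * t)) atTop (𝓝 0) := by
  refine squeeze_zero' (Eventually.of_forall fun t => chiIntegrandNorm_nonneg m z _)
    ((eventually_ge_atTop 1).mono fun t ht => chiIntegrandNorm_ray_le hc m z ht) ?_
  simpa using (tendsto_rpow_mul_exp_neg_mul_atTop_nhds_zero _ _
    (pow_pos (norm_pos_iff.mpr hz) 2)).const_mul (∏ j, (‖z‖ + ‖a j‖) ^ ((m j : ℝ) + c j))

theorem norm_chiIntegrand_of_conj_notMem
    (hWabs : ∀ z ∉ cutSet l a, ‖W z‖ = ∏ j, ‖z - a j‖ ^ c j)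
    (hWb : ∀ s, Wb s = conj (W (conj s))) {s : ℂ} (hs : conj s ∉ cutSet l a)
    (m : Fin l → ℕ) (z : ℂ) :
    ‖chiIntegrand l a Wb m z s‖ = chiIntegrandNorm l a c m z s :=
  norm_chiIntegrand (ne_conj_of_conj_notMem_cutSet hs) (norm_conj_branch hWabs hWb hs)

theorem continuousAt_chiIntegrand (hW : DifferentiableOn ℂ W (cutSet l a)ᶜ)
    (hWabs : ∀ z ∉ cutSet l a, ‖W z‖ = ∏ j, ‖z - a j‖ ^ c j)
    (hWb : ∀ s, Wb s = conj (W (conj s))) {s : ℂ} (hs : conj s ∉ cutSet l a)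
    (m : Fin l → ℕ) (z : ℂ) : ContinuousAt (chiIntegrand l a Wb m z) s := by
  have hWb' := (hasDerivAt_conj_branch hW hWabs hWb hs).continuousAt
  unfold chiIntegrand
  fun_prop

theorem segmentRayIntegrable_chiIntegrand (hc : ∀ j, 0 ≤ c j)
    (hW : DifferentiableOn ℂ W (cutSet l a)ᶜ)
    (hWabs : ∀ z ∉ cutSet l a, ‖W z‖ = ∏ j, ‖z - a j‖ ^ c j)
    (hWb : ∀ s, Wb s = conj (W (conj s))) {p z : ℂ} (hz : z ≠ 0)
    (hseg : ∀ t ∈ Ioc (0 : ℝ) 1, conj (p + (t : ℂ) * (conj z - p)) ∉ cutSet l a)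
    (hray : ∀ t ∈ Ici (1 : ℝ), conj (conj z * t) ∉ cutSet l a) (m : Fin l → ℕ) :
    SegmentRayIntegrable p (conj z) (chiIntegrand l a Wb m z) := by
  refine .of_norm_le (continuous_chiIntegrandNorm (a := a) hc m z) (fun t ht => ?_) (fun t ht => ?_)
    (integrableOn_chiIntegrandNorm_ray hc m hz)
  · exact ⟨continuousAt_chiIntegrand hW hWabs hWb (hseg t ht) m z,
      (norm_chiIntegrand_of_conj_notMem hWabs hWb (hseg t ht) m z).le⟩
  · have hs := hray t (Ioi_subset_Ici_self ht)
    exact ⟨continuousAt_chiIntegrand hW hWabs hWb hs m z,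
      (norm_chiIntegrand_of_conj_notMem hWabs hWb hs m z).le⟩

theorem tendsto_chiIntegrand_ray (hc : ∀ j, 0 ≤ c j)
    (hWabs : ∀ z ∉ cutSet l a, ‖W z‖ = ∏ j, ‖z - a j‖ ^ c j)
    (hWb : ∀ s, Wb s = conj (W (conj s))) {z : ℂ} (hz : z ≠ 0)
    (hray : ∀ t ∈ Ici (1 : ℝ), conj (conj z * t) ∉ cutSet l a) (m : Fin l → ℕ) :
    Tendsto (fun t : ℝ => chiIntegrand l a Wb m z (conj z * t)) atTop (𝓝 0) := by
  refine squeeze_zero_norm' ((eventually_ge_atTop 1).mono fun t ht => ?_)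
    (tendsto_chiIntegrandNorm_ray (a := a) hc m hz)
  exact (norm_chiIntegrand_of_conj_notMem hWabs hWb (hray t ht) m z).le

theorem tendsto_chiIntegrand_segment_start (hc : ∀ j, 0 ≤ c j)
    (hWabs : ∀ z ∉ cutSet l a, ‖W z‖ = ∏ j, ‖z - a j‖ ^ c j)
    (hWb : ∀ s, Wb s = conj (W (conj s))) {i : Fin l} {m : Fin l → ℕ} (hm : m i ≠ 0) {q z : ℂ}
    (hseg : ∀ t ∈ Ioc (0 : ℝ) 1, conj (conj (a i) + (t : ℂ) * (q - conj (a i))) ∉ cutSet l a) :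
    Tendsto (fun t : ℝ => chiIntegrand l a Wb m z (conj (a i) + (t : ℂ) * (q - conj (a i))))
      (𝓝[>] 0) (𝓝 (chiIntegrand l a Wb m z (conj (a i)))) := by
  rw [chiIntegrand_conj_eq_zero hm]
  refine squeeze_zero_norm' (eventually_of_mem (Ioc_mem_nhdsGT zero_lt_one) ?_) (a := fun t : ℝ =>
    chiIntegrandNorm l a c m z (conj (a i) + (t : ℂ) * (q - conj (a i)))) ?_
  · exact fun t ht => (norm_chiIntegrand_of_conj_notMem hWabs hWb (hseg t ht) m z).le
  · have h := ((continuous_chiIntegrandNorm (a := a) hc m z).comp (by fun_prop :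
      Continuous fun t : ℝ => conj (a i) + (t : ℂ) * (q - conj (a i)))).tendsto 0
    have hm' : (m i : ℝ) + c i ≠ 0 :=
      (add_pos_of_pos_of_nonneg (Nat.cast_pos.mpr (Nat.pos_of_ne_zero hm)) (hc i)).ne'
    simpa [Function.comp_def, chiIntegrandNorm_conj_eq_zero hm'] using
      h.mono_left nhdsWithin_le_nhds

end Chi

theorem chiTilde_recurrence_general
    (l : ℕ) (hl : 0 < l) (a : Fin l → ℂ)
    (c : Fin l → ℝ) (hc : ∀ i, 0 < c i)
    (W : ℂ → ℂ) (hW : DifferentiableOn ℂ W (cutSet l a)ᶜ)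
    (hWabs : ∀ z ∉ cutSet l a,
      ‖W z‖ = ∏ j, (‖z - a j‖) ^ (c j))
    (Wb : ℂ → ℂ) (hWb : ∀ s, Wb s = starRingEnd ℂ (W (starRingEnd ℂ s)))
    (z : ℂ) (hz : z ≠ 0)
    (hpath : ∀ s : ℂ,
      (s ∈ segment ℝ (starRingEnd ℂ (a ⟨0, hl⟩)) (starRingEnd ℂ z) ∨
        ∃ t : ℝ, 1 ≤ t ∧ s = starRingEnd ℂ z * t) →
      s ≠ starRingEnd ℂ (a ⟨0, hl⟩) →
      ∀ j, ∀ t : ℝ, 1 ≤ t → s ≠ starRingEnd ℂ (a j) * t)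
    (k : Fin l → ℕ) (hk : ∀ j, 1 ≤ k j) :
    z * chiTilde l a W Wb (starRingEnd ℂ (a ⟨0, hl⟩)) k z =
      ∑ j, ((c j : ℂ) + (k j : ℕ)) *
        chiTilde l a W Wb (starRingEnd ℂ (a ⟨0, hl⟩)) (k - Pi.single j 1) z := by
  obtain ⟨hseg, hray⟩ := conj_notMem_cutSet_of_mem_contour (by simpa using hz) hpath
  have hc' : ∀ j, 0 ≤ c j := fun j => (hc j).le
  have hk' : ∀ j, k j ≠ 0 := fun j => Nat.one_le_iff_ne_zero.mp (hk j)
  have hint := segmentRayIntegrable_chiIntegrand hc' hW hWabs hWb hz hseg hray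
  have hderiv : ∀ s, conj s ∉ cutSet l a → HasDerivAt (chiIntegrand l a Wb k z)
      (∑ j, ((c j : ℂ) + k j) * chiIntegrand l a Wb (k - Pi.single j 1) z s -
        z * chiIntegrand l a Wb k z s) s := fun s hs =>
    hasDerivAt_chiIntegrand hk' (ne_conj_of_conj_notMem_cutSet hs)
      (hasDerivAt_conj_branch hW hWabs hWb hs)
  have hsum := SegmentRayIntegrable.finset_sum (s := Finset.univ) fun j _ =>
    (hint (k - Pi.single j 1)).const_mul ((c j : ℂ) + k j)
  have hFTC := segmentRayIntegral_eq_neg_of_hasDerivAt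
    (fun t ht => hderiv _ (hseg t (Ioo_subset_Ioc_self ht))) (fun t ht => hderiv _ (hray t ht))
    (tendsto_chiIntegrand_segment_start hc' hWabs hWb (hk' _) hseg)
    (hsum.sub ((hint k).const_mul z)) (tendsto_chiIntegrand_ray hc' hWabs hWb hz hray k)
  rw [chiIntegrand_conj_eq_zero (hk' _), neg_zero, segmentRayIntegral_sub hsum
    ((hint k).const_mul z), segmentRayIntegral_finset_sum _ fun j _ => (hint _).const_mul _] at hFTC
  simp only [segmentRayIntegral_const_mul] at hFTC
  simp only [chiTilde_eq_mul_segmentRayIntegral, mul_left_comm _ (W z), ← Finset.mul_sum]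
  linear_combination -(W z) * hFTC

/-- Lemma 2: the recurrence
`z · χ̃_k(z) = Σ_j (c_j + k_j) · χ̃_{k-e_j}(z)` for multi-indices with all
entries `≥ 1`, obtained by integrating the total derivative
`∂_s[∏_j (s-ā_j)^(c_j+k_j) e^{-zs}]` along the contour. -/
theorem chiTilde_recurrence
    (l : ℕ) (hl : 0 < l) (a : Fin l → ℂ) (ha0 : ∀ i, a i ≠ 0)
    (ha : Function.Injective fun i => Complex.arg (a i))
    (c : Fin l → ℝ) (hc : ∀ i, 0 < c i)
    (W : ℂ → ℂ) (hW : DifferentiableOn ℂ W (cutSet l a)ᶜ)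
    (hWabs : ∀ z ∉ cutSet l a,
      ‖W z‖ = ∏ j, (‖z - a j‖) ^ (c j))
    (Wb : ℂ → ℂ) (hWb : ∀ s, Wb s = starRingEnd ℂ (W (starRingEnd ℂ s)))
    (z : ℂ) (hz : z ≠ 0)
    (hpath : ∀ s : ℂ,
      (s ∈ segment ℝ (starRingEnd ℂ (a ⟨0, hl⟩)) (starRingEnd ℂ z) ∨
        ∃ t : ℝ, 1 ≤ t ∧ s = starRingEnd ℂ z * t) →
      s ≠ starRingEnd ℂ (a ⟨0, hl⟩) →
      ∀ j, ∀ t : ℝ, 1 ≤ t → s ≠ starRingEnd ℂ (a j) * t)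
    (k : Fin l → ℕ) (hk : ∀ j, 1 ≤ k j) :
    z * chiTilde l a W Wb (starRingEnd ℂ (a ⟨0, hl⟩)) k z =
      ∑ j, ((c j : ℂ) + (k j : ℕ)) *
        chiTilde l a W Wb (starRingEnd ℂ (a ⟨0, hl⟩)) (k - Pi.single j 1) z :=
  chiTilde_recurrence_general l hl a c hc W hW hWabs Wb hWb z hz hpath k hk
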